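/- For the normalized weighted majority (pairwise) matrices: d_pair(ID_m, UN_m) = m(m−1)/2, d_pair(UN_m, ST_m) = m²/4, and d_pair(ID_m, ST_m) = m(m−2)/4, where m is even for the statements involving ST_m. -/
import Mathlib


open Finset

noncomputable section
open scoped Classical

/-- Normalized pairwise (weighted majority) matrix of the identity election. -/
def pID (m : ℕ) : Fin m → Fin m → ℝ := fun i j => if i < j then 1 else 0

/-- Normalized pairwise matrix of uniformity (and antagonism). -/
def pUN (m : ℕ) : Fin m → Fin m → ℝ := fun _ _ => 1 / 2

/-- Normalized pairwise matrix of stratification (m even): the upper-right block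
is all 1, the lower-left block is all 0, the diagonal blocks are 1/2. -/
def pST (m : ℕ) : Fin m → Fin m → ℝ := fun i j =>
  if (i : ℕ) < m / 2 ∧ m / 2 ≤ (j : ℕ) then 1
  else if (j : ℕ) < m / 2 ∧ m / 2 ≤ (i : ℕ) then 0
  else 1 / 2

/-- Pairwise distance: minimum over simultaneous row/column bijections of the sum
over off-diagonal entries of absolute differences. -/
def dpairM {m : ℕ} (X Y : Fin m → Fin m → ℝ) : ℝ :=
  ⨅ σ : Equiv.Perm (Fin m),
    ∑ p ∈ Finset.univ.offDiag, |X p.1 p.2 - Y (σ p.1) (σ p.2)|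

lemma sum_if_lt (m k : ℕ) (hk : k ≤ m) (c : ℝ) :
    ∑ j : Fin m, (if (j:ℕ) < k then c else 0) = k * c := by
  rw [Fin.sum_univ_eq_sum_range (fun n => if n < k then c else 0) m, ← Finset.sum_filter]
  have : (Finset.range m).filter (fun n => n < k) = Finset.range k := by
    ext x; simp only [Finset.mem_filter, Finset.mem_range]; omega
  rw [this, Finset.sum_const, Finset.card_range, nsmul_eq_mul]

lemma sum_if_not_lt (m k : ℕ) (c : ℝ) :
    ∑ j : Fin m, (if ¬ (j:ℕ) < k then c else 0) = (m - k : ℕ) * c := by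
  rw [Fin.sum_univ_eq_sum_range (fun n => if ¬ n < k then c else 0) m, ← Finset.sum_filter]
  have : (Finset.range m).filter (fun n => ¬ n < k) = Finset.Ico k m := by
    ext x; simp only [Finset.mem_filter, Finset.mem_range, Finset.mem_Ico]; omega
  rw [this, Finset.sum_const, Nat.card_Ico, nsmul_eq_mul]

lemma reindex {m : ℕ} (σ : Equiv.Perm (Fin m)) (f : Fin m → Fin m → ℝ) :
    ∑ p ∈ (univ : Finset (Fin m)).offDiag, f (σ p.1) (σ p.2)
      = ∑ p ∈ (univ : Finset (Fin m)).offDiag, f p.1 p.2 := by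
  apply Finset.sum_equiv (Equiv.prodCongr σ σ)
  · intro p; simp [Finset.mem_offDiag]
  · intro p _; rfl

lemma sum_half {m : ℕ} : ∑ _p ∈ (univ : Finset (Fin m)).offDiag, (1/2 : ℝ)
    = (m:ℝ) * ((m:ℝ) - 1) / 2 := by
  have hle : m ≤ m * m := by
    rcases Nat.eq_zero_or_pos m with h | h
    · simp [h]
    · exact Nat.le_mul_of_pos_left m h
  rw [Finset.sum_const, Finset.offDiag_card, nsmul_eq_mul]
  simp only [card_univ, Fintype.card_fin]
  rw [Nat.cast_sub hle]
  push_cast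
  ring

lemma sum_h {m : ℕ} (hm : Even m) :
    ∑ p ∈ (univ : Finset (Fin m)).offDiag,
      (if ((p.1:ℕ) < m/2 ↔ (p.2:ℕ) < m/2) then (1/2:ℝ) else 0)
    = (m:ℝ) * ((m:ℝ) - 2) / 4 := by
  set k := m / 2 with hk
  have h2 : 2 * k = m := by obtain ⟨t, rfl⟩ := hm; omega
  set H : Fin m × Fin m → ℝ := fun p => if ((p.1:ℕ) < k ↔ (p.2:ℕ) < k) then (1/2:ℝ) else 0
    with hH
  have key : ∑ p ∈ (univ : Finset (Fin m)) ×ˢ univ, H p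
      = ∑ p ∈ (univ : Finset (Fin m)).diag, H p + ∑ p ∈ (univ : Finset (Fin m)).offDiag, H p := by
    rw [← Finset.diag_union_offDiag, Finset.sum_union (Finset.disjoint_diag_offDiag _)]
  have hprod : ∑ p ∈ (univ : Finset (Fin m)) ×ˢ univ, H p = (m:ℝ) * ((k:ℝ) * (1/2)) := by
    rw [Finset.sum_product]
    have inner : ∀ i : Fin m,
        ∑ j : Fin m, H (i, j) = (k:ℝ) * (1/2) := by
      intro i
      by_cases hi : (i:ℕ) < k
      · simp only [hH, hi, true_iff]
        exact sum_if_lt m k (by omega) (1/2)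
      · simp only [hH, hi, false_iff]
        rw [sum_if_not_lt m k (1/2)]
        congr 1
        norm_cast
        omega
    rw [Finset.sum_congr rfl (fun i _ => inner i), Finset.sum_const, nsmul_eq_mul,
      card_univ, Fintype.card_fin]
  have hdiag : ∑ p ∈ (univ : Finset (Fin m)).diag, H p = (m:ℝ) * (1/2) := by
    rw [Finset.sum_diag]
    simp [hH]
  have hoff : ∑ p ∈ (univ : Finset (Fin m)).offDiag, H p
      = (m:ℝ) * ((k:ℝ) * (1/2)) - (m:ℝ) * (1/2) := by
    rw [← hprod, key, hdiag]; ring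
  rw [hoff]
  have : (m:ℝ) = 2 * (k:ℝ) := by exact_mod_cast h2.symm
  rw [this]; ring

/-- d_pair(ID,UN) = m(m−1)/2; and for even m, d_pair(UN,ST) = m²/4 and
d_pair(ID,ST) = m(m−2)/4. -/
theorem stmt12 (m : ℕ) :
    dpairM (pID m) (pUN m) = (m : ℝ) * ((m : ℝ) - 1) / 2 ∧
    (Even m →
      dpairM (pUN m) (pST m) = (m : ℝ) ^ 2 / 4 ∧
      dpairM (pID m) (pST m) = (m : ℝ) * ((m : ℝ) - 2) / 4) := by
  refine ⟨?_, fun hm => ⟨?_, ?_⟩⟩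
  · -- ID vs UN : summand constant
    have hσ : ∀ σ : Equiv.Perm (Fin m),
        (∑ p ∈ Finset.univ.offDiag, |pID m p.1 p.2 - pUN m (σ p.1) (σ p.2)|)
          = (m:ℝ) * ((m:ℝ) - 1) / 2 := by
      intro σ
      rw [← sum_half]
      apply Finset.sum_congr rfl
      intro p _
      simp only [pID, pUN]
      split <;> norm_num
    rw [dpairM, iInf_congr hσ, ciInf_const]
  · -- UN vs ST
    have hσ : ∀ σ : Equiv.Perm (Fin m),
        (∑ p ∈ Finset.univ.offDiag, |pUN m p.1 p.2 - pST m (σ p.1) (σ p.2)|)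
          = (m:ℝ) ^ 2 / 4 := by
      intro σ
      have h1 : (∑ p ∈ Finset.univ.offDiag, |pUN m p.1 p.2 - pST m (σ p.1) (σ p.2)|)
          = ∑ p ∈ (univ : Finset (Fin m)).offDiag, |(1/2 : ℝ) - pST m p.1 p.2| := by
        simp only [pUN]
        exact reindex σ (fun a b => |(1/2 : ℝ) - pST m a b|)
      have h2 : ∀ a b : Fin m, |(1/2 : ℝ) - pST m a b|
          = 1/2 - (if ((a:ℕ) < m/2 ↔ (b:ℕ) < m/2) then (1/2:ℝ) else 0) := by
        intro a b
        obtain ⟨a, _⟩ := a; obtain ⟨b, _⟩ := b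
        simp only [pST, Fin.val_mk]
        split_ifs <;>
          first
            | (exfalso; omega)
            | (norm_num [abs_of_nonneg, abs_of_nonpos]; done)
      rw [h1, Finset.sum_congr rfl (fun p _ => h2 p.1 p.2), Finset.sum_sub_distrib,
        sum_half, sum_h hm]
      ring
    rw [dpairM, iInf_congr hσ, ciInf_const]
  · -- ID vs ST
    have hpt : ∀ (a b x y : Fin m),
        (if ((x:ℕ) < m/2 ↔ (y:ℕ) < m/2) then (1/2:ℝ) else 0) ≤ |pID m a b - pST m x y| := by
      intro a b x y
      obtain ⟨a, _⟩ := a; obtain ⟨b, _⟩ := b; obtain ⟨x, _⟩ := x; obtain ⟨y, _⟩ := y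
      simp only [pID, pST, Fin.lt_def, Fin.val_mk]
      split_ifs <;>
        first
          | (exfalso; omega)
          | positivity
          | (norm_num [abs_of_nonneg, abs_of_nonpos]; done)
    have heq : ∀ a b : Fin m, |pID m a b - pST m a b|
        = (if ((a:ℕ) < m/2 ↔ (b:ℕ) < m/2) then (1/2:ℝ) else 0) := by
      intro a b
      obtain ⟨a, _⟩ := a; obtain ⟨b, _⟩ := b
      simp only [pID, pST, Fin.lt_def, Fin.val_mk]
      split_ifs <;>
        first
          | (exfalso; omega)
          | (norm_num [abs_of_nonneg, abs_of_nonpos]; done)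
    apply le_antisymm
    · have hle := ciInf_le (f := fun σ : Equiv.Perm (Fin m) =>
          ∑ p ∈ Finset.univ.offDiag, |pID m p.1 p.2 - pST m (σ p.1) (σ p.2)|)
        ⟨0, by rintro x ⟨σ, rfl⟩; positivity⟩ 1
      refine le_trans hle ?_
      simp only [Equiv.Perm.one_apply]
      rw [Finset.sum_congr rfl (fun p _ => heq p.1 p.2), sum_h hm]
    · apply le_ciInf
      intro σ
      rw [← sum_h hm, ← reindex σ (fun a b => if ((a:ℕ) < m/2 ↔ (b:ℕ) < m/2) then (1/2:ℝ) else 0)]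
      exact Finset.sum_le_sum (fun p _ => hpt p.1 p.2 (σ p.1) (σ p.2))

end
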